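/- arXiv:1911.09825 — 2 statements merged into one kernel-verified Lean document; each statement's English description precedes it below -/
import Mathlib

section
/- Let n, r be natural numbers, let s : (Fin n → ℂ) → (Fin r → ℂ) be differentiable (Differentiable ℂ s), and define the superpotential W : (Fin n → ℂ) × (Fin r → ℂ) → ℂ by W(y,p) = ∑ i, p i * s y i. Then the critical locus {(y,p) | fderiv ℂ W (y,p) = 0} is equal to the set {(y,p) | s y = 0 ∧ p = 0} if and only if for every y with s y = 0 the derivative fderiv ℂ s y : (Fin n → ℂ) →L[ℂ] (Fin r → ℂ) is surjective. (This is Lemma 2.3 of the paper: for a vector bundle E with regular section s cutting out X on a smooth space, X is smooth if and only if the critical locus of the superpotential W : E^∨ → ℂ induced by s equals X; the étale-local model proved in the paper is exactly this statement for a trivial rank-r bundle on affine space.) -/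
/-!
At `(y, p)` the differential of `W` is `(v, q) ↦ p ⬝ᵥ ds_y v + q ⬝ᵥ s y`, so the critical points
are the `(y, p)` with `s y = 0` and `p` annihilating the image of `ds_y`. The critical locus is
therefore the zero section over the zero locus of `s` exactly when, at every zero `y`, no nonzero
covector annihilates the image of `ds_y`; over a field this means `ds_y` is surjective.
-/

theorem LinearMap.surjective_iff_forall_dotProduct_eq_zero {K E ι : Type*} [Field K]
    [AddCommGroup E] [Module K E] [Fintype ι] (A : E →ₗ[K] ι → K) :
    Function.Surjective A ↔ ∀ p : ι → K, (∀ v, p ⬝ᵥ A v = 0) → p = 0 := by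
  classical
  rw [← LinearMap.dualMap_injective_iff, injective_iff_map_eq_zero,
    ← (dotProductEquiv K ι).forall_congr_right]
  simp [LinearMap.ext_iff]

section Superpotential

variable {𝕜 E ι : Type*} [NontriviallyNormedField 𝕜] [NormedAddCommGroup E] [NormedSpace 𝕜 E]
  [Fintype ι]

def superpotential (s : E → ι → 𝕜) : E × (ι → 𝕜) → 𝕜 :=
  fun yp => yp.2 ⬝ᵥ s yp.1

variable {s : E → ι → 𝕜} {y : E}

theorem fderiv_superpotential_apply (hs : DifferentiableAt 𝕜 s y) (p : ι → 𝕜)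
    (v : E) (q : ι → 𝕜) :
    fderiv 𝕜 (superpotential s) (y, p) (v, q) =
      p ⬝ᵥ fderiv 𝕜 s y v + q ⬝ᵥ s y := by
  have hcoord (i : ι) : HasFDerivAt (fun yp : E × (ι → 𝕜) => yp.2 i * s yp.1 i)
      (p i • ((ContinuousLinearMap.proj i).comp ((fderiv 𝕜 s y).comp (.fst 𝕜 E (ι → 𝕜)))) +
        s y i • (ContinuousLinearMap.proj i).comp (.snd 𝕜 E (ι → 𝕜))) (y, p) :=
    have hp : HasFDerivAt (fun yp : E × (ι → 𝕜) => yp.2 i)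
        ((ContinuousLinearMap.proj i).comp (.snd 𝕜 E (ι → 𝕜))) (y, p) :=
      hasFDerivAt_pi'.1 hasFDerivAt_snd i
    hp.fun_mul (hasFDerivAt_pi'.1 (hs.hasFDerivAt.comp (y, p) hasFDerivAt_fst) i)
  have hW : HasFDerivAt (superpotential s) (∑ i, _) (y, p) :=
    HasFDerivAt.fun_sum fun i _ => hcoord i
  rw [hW.fderiv]
  simp [dotProduct, Finset.sum_add_distrib, mul_comm]

theorem fderiv_superpotential_eq_zero_iff (hs : DifferentiableAt 𝕜 s y) (p : ι → 𝕜) :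
    fderiv 𝕜 (superpotential s) (y, p) = 0 ↔
      s y = 0 ∧ ∀ v, p ⬝ᵥ fderiv 𝕜 s y v = 0 := by
  simp only [ContinuousLinearMap.ext_iff, Prod.forall, fderiv_superpotential_apply hs,
    zero_apply]
  constructor
  · intro h
    refine ⟨dotProduct_eq_zero_iff.1 fun q => ?_, fun v => by simpa using h v 0⟩
    simpa [dotProduct_comm] using h 0 q
  · rintro ⟨hsy, hp⟩ v q
    simp [hsy, hp v]

end Superpotential

/-- local model of Lemma 2.3 of the paper.
For a differentiable section `s` of the trivial rank-`r` bundle on affine `n`-space,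
with superpotential `W (y, p) = ∑ i, p i * s y i`, the critical locus of `W` equals
the zero locus of `s` embedded via the zero section if and only if for every zero
`y` of `s` the derivative `fderiv ℂ s y` is surjective. -/
theorem crit_locus_eq_zero_locus_iff_surjective_fderiv
    (n r : ℕ) (s : (Fin n → ℂ) → (Fin r → ℂ)) (hs : Differentiable ℂ s)
    (W : (Fin n → ℂ) × (Fin r → ℂ) → ℂ)
    (hW : W = fun yp => ∑ i, yp.2 i * s yp.1 i) :
    {yp : (Fin n → ℂ) × (Fin r → ℂ) | fderiv ℂ W yp = 0} =
      {yp : (Fin n → ℂ) × (Fin r → ℂ) | s yp.1 = 0 ∧ yp.2 = 0} ↔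
    ∀ y : Fin n → ℂ, s y = 0 → Function.Surjective (fderiv ℂ s y) := by
  have hcrit (y : Fin n → ℂ) (p : Fin r → ℂ) :
      fderiv ℂ W (y, p) = 0 ↔ s y = 0 ∧ ∀ v, p ⬝ᵥ fderiv ℂ s y v = 0 :=
    hW ▸ fderiv_superpotential_eq_zero_iff (hs y) p
  simp only [Set.ext_iff, Prod.forall, Set.mem_ofPred_eq, hcrit]
  simp_rw [← ContinuousLinearMap.coe_coe, LinearMap.surjective_iff_forall_dotProduct_eq_zero,
    ContinuousLinearMap.coe_coe]
  constructor
  · intro hlocus y hy p hp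
    exact ((hlocus y p).1 ⟨hy, hp⟩).2
  · intro hnondeg y p
    exact ⟨fun ⟨hy, hp⟩ => ⟨hy, hnondeg y hy p hp⟩, by rintro ⟨hy, rfl⟩; simp [hy]⟩
end

section
/- Let A be a commutative ring, let a₁, …, a_r ∈ A be a regular sequence generating the ideal I = (a₁,…,a_r), and let J ⊆ R(A,I) be the ideal of the extended Rees algebra generated by a₁·T⁻¹, …, a_r·T⁻¹. Then the composite A-algebra homomorphism A[X] → R(A,I) → R(A,I)/J sending X to the class of T is surjective, and its kernel is the ideal I·A[X]; equivalently, R(A,I)/J is isomorphic as an A-algebra to the polynomial ring (A/I)[X]. (This is the second assertion of Lemma 2.2 of the paper: the zero locus of the regular section s_𝒴⁻ on the deformation to the normal cone 𝒴 is X × 𝔸¹, in its affine-local form.) -/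
open LaurentPolynomial

variable (A : Type*) [CommRing A]

/-- The extended Rees algebra of an ideal `I ⊆ A`: the `A`-subalgebra of the Laurent
polynomial ring `A[T,T⁻¹]` consisting of those Laurent polynomials `∑ₙ xₙ Tⁿ` whose
coefficient `xₙ` lies in `I ^ (-n)` for all `n < 0` (for `n ≥ 0` the condition is
vacuous since `I ^ 0 = ⊤`). -/
def extendedReesAlgebra (I : Ideal A) : Subalgebra A (LaurentPolynomial A) where
  carrier := {f | ∀ n : ℤ, f.coeff n ∈ I ^ (-n).toNat}
  zero_mem' := by intro n; simp
  add_mem' := by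
    intro f g hf hg n
    rw [AddMonoidAlgebra.coeff_add, Finsupp.add_apply]
    exact add_mem (hf n) (hg n)
  mul_mem' := by
    classical
    intro f g hf hg n
    rw [AddMonoidAlgebra.coeff_mul]
    refine Submodule.sum_mem _ fun p _ => Submodule.sum_mem _ fun q _ => ?_
    show (if p + q = n then f.coeff p * g.coeff q else 0) ∈ I ^ (-n).toNat
    split_ifs with h
    · have hmul := Ideal.mul_mem_mul (hf p) (hg q)
      rw [← pow_add] at hmul
      exact Ideal.pow_le_pow_right (by omega) hmul
    · exact zero_mem _
  one_mem' := by
    intro n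
    rw [← single_zero_one_eq_one, AddMonoidAlgebra.coeff_single]
    rcases eq_or_ne n 0 with rfl | hn
    · rw [Finsupp.single_eq_same]; simp
    · rw [Finsupp.single_eq_of_ne hn]; exact zero_mem _
  algebraMap_mem' := by
    intro x n
    rw [LaurentPolynomial.algebraMap_apply, LaurentPolynomial.C_apply]
    rcases eq_or_ne n 0 with rfl | hn
    · simp
    · rw [if_neg hn]; exact zero_mem _

theorem mem_extendedReesAlgebra_iff (I : Ideal A) (f : LaurentPolynomial A) :
    f ∈ extendedReesAlgebra A I ↔ ∀ n : ℤ, f.coeff n ∈ I ^ (-n).toNat := Iff.rfl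

theorem single_mem_extendedReesAlgebra (I : Ideal A) (m : ℤ) (x : A)
    (hx : x ∈ I ^ (-m).toNat) :
    (AddMonoidAlgebra.single m x : LaurentPolynomial A) ∈ extendedReesAlgebra A I := by
  rw [mem_extendedReesAlgebra_iff]
  intro n
  rw [AddMonoidAlgebra.coeff_single]
  rcases eq_or_ne n m with rfl | hn
  · rwa [Finsupp.single_eq_same]
  · rw [Finsupp.single_eq_of_ne hn]; exact zero_mem _

theorem C_mul_T_neg_one_mem_extendedReesAlgebra (I : Ideal A) {x : A} (hx : x ∈ I) :
    C x * T (-1) ∈ extendedReesAlgebra A I := by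
  rw [← single_eq_C_mul_T]
  exact single_mem_extendedReesAlgebra A I (-1) x (by simpa using hx)

theorem T_one_mem_extendedReesAlgebra (I : Ideal A) :
    T 1 ∈ extendedReesAlgebra A I := by
  have h : (T 1 : LaurentPolynomial A) = AddMonoidAlgebra.single 1 1 := rfl
  rw [h]
  exact single_mem_extendedReesAlgebra A I 1 1 (by simp)

/-! In degree `n` the ideal `J = (x·T⁻¹ | x ∈ I)` of `R(A,I)` is `I ^ max 1 (-n)`. On the one
hand it contains `x·Tⁿ` for `n < 0` and `x ∈ I ^ (-n)`, by induction on `-n` writing such an `x` as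
a sum of products `y·z` with `y ∈ I`, so that `y·z·Tⁿ = (y·T⁻¹)·(z·Tⁿ⁺¹)`; hence modulo `J` every
element of `R(A,I)` agrees with its truncation to nonnegative degrees, a polynomial in `T`. On the
other hand every coefficient of an element of `J` lies in `I` (elements with this property form
an ideal, the kernel of reduction modulo `I`), so a polynomial in `T` lies in `J` exactly when
its coefficients lie in `I`. -/

namespace LaurentPolynomial

variable {A} {I : Ideal A}

theorem coeff_C_mul_T_mem {x : A} (hx : x ∈ I) (m n : ℤ) : (C x * T m).coeff n ∈ I := by
  rw [← single_eq_C_mul_T, AddMonoidAlgebra.coeff_single, Finsupp.single_apply]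
  split_ifs
  exacts [hx, zero_mem I]

theorem _root_.Polynomial.coeff_toLaurent_natCast (p : Polynomial A) (n : ℕ) :
    (Polynomial.toLaurent p).coeff n = p.coeff n :=
  Finsupp.mapDomain_apply Nat.castEmbedding.injective _ n

theorem mem_ker_mapRingHom_mk_iff {f : LaurentPolynomial A} :
    f ∈ RingHom.ker (AddMonoidAlgebra.mapRingHom ℤ (Ideal.Quotient.mk I)) ↔ ∀ n, f.coeff n ∈ I := by
  simp [← AddMonoidAlgebra.coeff_inj, Finsupp.ext_iff, Ideal.Quotient.eq_zero_iff_mem]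

end LaurentPolynomial

namespace extendedReesAlgebra

variable {A} {I : Ideal A}

section NegativePart

-- An `R(A,I)`-submodule of `A[T;T⁻¹]` rather than an ideal of `R(A,I)`: its members need no
-- proof of membership in `R(A,I)`, which keeps the induction on powers of `I` free of subtypes.
variable {M : Submodule (extendedReesAlgebra A I) (LaurentPolynomial A)}
  (hM : ∀ x ∈ I, C x * T (-1) ∈ M)
include hM

theorem single_neg_succ_mem (k : ℕ) {x : A} (hx : x ∈ I ^ (k + 1)) :
    (AddMonoidAlgebra.single (-(k + 1 : ℤ)) x : LaurentPolynomial A) ∈ M := by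
  induction k generalizing x with
  | zero =>
    rw [zero_add, pow_one] at hx
    simpa [single_eq_C_mul_T] using hM x hx
  | succ k ih =>
    rw [pow_succ'] at hx
    induction hx using Submodule.mul_induction_on' with
    | mem_mul_mem y hy z hz =>
      have hy' : AddMonoidAlgebra.single (-1) y ∈ extendedReesAlgebra A I :=
        single_mem_extendedReesAlgebra A I _ y (by simpa using hy)
      have key : (AddMonoidAlgebra.single (-(↑(k + 1) + 1 : ℤ)) (y * z) : LaurentPolynomial A) =
          (⟨_, hy'⟩ : extendedReesAlgebra A I) • AddMonoidAlgebra.single (-(k + 1 : ℤ)) z := by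
        rw [Algebra.smul_def]
        convert (AddMonoidAlgebra.single_mul_single (-1 : ℤ) (-(k + 1 : ℤ)) y z).symm using 2
        · push_cast; ring
        · rfl
      rw [key]
      exact M.smul_mem _ (ih hz)
    | add y _ z _ hy hz =>
      rw [AddMonoidAlgebra.single_add]
      exact M.add_mem hy hz

theorem single_mem_of_neg {n : ℤ} (hn : n < 0) {x : A} (hx : x ∈ I ^ (-n).toNat) :
    (AddMonoidAlgebra.single n x : LaurentPolynomial A) ∈ M := by
  obtain ⟨k, rfl⟩ : ∃ k : ℕ, n = -(k + 1 : ℤ) := ⟨(-n).toNat - 1, by omega⟩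
  exact single_neg_succ_mem hM k (by simpa using hx)

theorem mem_of_coeff_nonneg_eq_zero {f : LaurentPolynomial A} (hf : f ∈ extendedReesAlgebra A I)
    (hf₀ : ∀ n, 0 ≤ n → f.coeff n = 0) : f ∈ M := by
  rw [← AddMonoidAlgebra.sum_coeff_single f]
  refine Submodule.finsuppSum_mem _ _ _ _ fun n hn => single_mem_of_neg hM ?_ (hf n)
  by_contra! h
  exact hn (hf₀ n h)

end NegativePart

variable {J : Ideal (extendedReesAlgebra A I)}

theorem coe_mem_map_iff {g : extendedReesAlgebra A I} :
    (g : LaurentPolynomial A) ∈ Submodule.map (Algebra.linearMap _ _) J ↔ g ∈ J :=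
  SetLike.ext_iff.mp (Submodule.comap_map_eq_of_injective Subtype.val_injective J) g

theorem coe_aeval_T (p : Polynomial A) :
    ((Polynomial.aeval (⟨T 1, T_one_mem_extendedReesAlgebra A I⟩ : extendedReesAlgebra A I) p :
      extendedReesAlgebra A I) : LaurentPolynomial A) = Polynomial.toLaurent p := by
  rw [← Subalgebra.val_apply, ← Polynomial.aeval_algHom_apply, ← Polynomial.toLaurentAlg_apply]
  congr 1
  exact Polynomial.algHom_ext (by simp [Polynomial.toLaurent_X])

theorem coeff_mem_of_mem_span {s : Set (extendedReesAlgebra A I)}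
    (hs : ∀ g ∈ s, ∀ n, (g : LaurentPolynomial A).coeff n ∈ I) {g : extendedReesAlgebra A I}
    (hg : g ∈ Ideal.span s) (n : ℤ) : (g : LaurentPolynomial A).coeff n ∈ I := by
  have hle : Ideal.span s ≤ (RingHom.ker (AddMonoidAlgebra.mapRingHom ℤ
      (Ideal.Quotient.mk I))).comap (extendedReesAlgebra A I).val :=
    Ideal.span_le.mpr fun g hg => mem_ker_mapRingHom_mk_iff.mpr (hs g hg)
  exact mem_ker_mapRingHom_mk_iff.mp (hle hg) n

theorem C_mul_T_neg_one_mem_span_range {ι : Type*} {a : ι → A}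
    (hI : I = Ideal.span (Set.range a)) {x : A} (hx : x ∈ I) :
    (⟨C x * T (-1), C_mul_T_neg_one_mem_extendedReesAlgebra A I hx⟩ : extendedReesAlgebra A I) ∈
      Ideal.span (Set.range fun i => (⟨C (a i) * T (-1), C_mul_T_neg_one_mem_extendedReesAlgebra
        A I (hI ▸ Ideal.subset_span ⟨i, rfl⟩)⟩ : extendedReesAlgebra A I)) := by
  subst hI
  induction hx using Submodule.span_induction with
  | mem x hx =>
    obtain ⟨i, rfl⟩ := hx
    exact Ideal.subset_span ⟨i, rfl⟩
  | zero => convert (Ideal.span _).zero_mem; ext; simp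
  | add x y _ _ hx hy => convert add_mem hx hy; ext; simp [add_mul]
  | smul c x _ hx =>
    convert Ideal.mul_mem_left _ (algebraMap A _ c) hx
    ext
    simp [mul_assoc]

theorem aeval_mk_T (p : Polynomial A) :
    Polynomial.aeval (Ideal.Quotient.mk J ⟨T 1, T_one_mem_extendedReesAlgebra A I⟩) p =
      Ideal.Quotient.mk J (Polynomial.aeval ⟨T 1, T_one_mem_extendedReesAlgebra A I⟩ p) := by
  rw [← Ideal.Quotient.mkₐ_eq_mk A, Polynomial.aeval_algHom_apply]

theorem ker_aeval_mk_T_le (hJ : ∀ g ∈ J, ∀ n, (g : LaurentPolynomial A).coeff n ∈ I) :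
    RingHom.ker (Polynomial.aeval (Ideal.Quotient.mk J ⟨T 1, T_one_mem_extendedReesAlgebra A I⟩))
      ≤ I.map Polynomial.C := by
  intro p hp
  rw [RingHom.mem_ker, aeval_mk_T, Ideal.Quotient.eq_zero_iff_mem] at hp
  rw [Ideal.mem_map_C_iff]
  intro k
  simpa only [coe_aeval_T, Polynomial.coeff_toLaurent_natCast] using hJ _ hp k

section

variable (hJ : ∀ x (hx : x ∈ I),
  (⟨C x * T (-1), C_mul_T_neg_one_mem_extendedReesAlgebra A I hx⟩ : extendedReesAlgebra A I) ∈ J)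
include hJ

theorem map_C_le_ker_aeval_mk_T :
    I.map Polynomial.C ≤ RingHom.ker
      (Polynomial.aeval (Ideal.Quotient.mk J ⟨T 1, T_one_mem_extendedReesAlgebra A I⟩)) := by
  rw [Ideal.map_le_iff_le_comap]
  intro x hx
  rw [Ideal.mem_comap, RingHom.mem_ker, aeval_mk_T, Ideal.Quotient.eq_zero_iff_mem]
  convert J.mul_mem_right ⟨T 1, T_one_mem_extendedReesAlgebra A I⟩ (hJ x hx) using 1
  ext1
  rw [coe_aeval_T, Polynomial.toLaurent_C, MulMemClass.coe_mul, mul_assoc, ← T_add,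
    neg_add_cancel, T_zero, mul_one]

theorem aeval_mk_T_trunc (g : extendedReesAlgebra A I) :
    Polynomial.aeval (Ideal.Quotient.mk J ⟨T 1, T_one_mem_extendedReesAlgebra A I⟩)
      (trunc (g : LaurentPolynomial A)) = Ideal.Quotient.mk J g := by
  rw [aeval_mk_T, Ideal.Quotient.eq, ← coe_mem_map_iff]
  refine mem_of_coeff_nonneg_eq_zero (fun x hx => coe_mem_map_iff.mpr (hJ x hx))
    (Subalgebra.sub_mem _ (SetLike.coe_mem _) g.2) fun n hn => ?_
  lift n to ℕ using hn
  rw [Subalgebra.coe_sub, coe_aeval_T, AddMonoidAlgebra.coeff_sub, Finsupp.sub_apply,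
    Polynomial.coeff_toLaurent_natCast, sub_eq_zero]
  rfl

end

end extendedReesAlgebra

/-- second assertion of Lemma 2.2 of the paper, affine-local form.
Let `a₁, …, a_r` be a regular sequence in `A` generating `I`, and let `J ⊆ R(A,I)` be
the ideal of the extended Rees algebra generated by `a₁·T⁻¹, …, a_r·T⁻¹`.  Then the
composite `A`-algebra homomorphism `A[X] → R(A,I) → R(A,I)/J` sending `X` to the class
of `T` is surjective with kernel the ideal `I·A[X]`; equivalently
`R(A,I)/J ≅ (A/I)[X]` as `A`-algebras. -/
theorem extendedRees_quotient_by_section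
    (r : ℕ) (a : Fin r → A)
    (I : Ideal A) (hI : I = Ideal.span (Set.range a))
    (J : Ideal (extendedReesAlgebra A I))
    (hJ : J = Ideal.span (Set.range fun i : Fin r =>
      (⟨C (a i) * T (-1),
          C_mul_T_neg_one_mem_extendedReesAlgebra A I
            (by rw [hI]; exact Ideal.subset_span ⟨i, rfl⟩)⟩ :
        extendedReesAlgebra A I)))
    (φ : Polynomial A →ₐ[A] ((extendedReesAlgebra A I) ⧸ J))
    (hφ : φ = Polynomial.aeval
      (Ideal.Quotient.mk J ⟨T 1, T_one_mem_extendedReesAlgebra A I⟩)) :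
    Function.Surjective φ ∧
      RingHom.ker φ = Ideal.map (Polynomial.C : A →+* Polynomial A) I := by
  have hgen : ∀ x (hx : x ∈ I), (⟨C x * T (-1), C_mul_T_neg_one_mem_extendedReesAlgebra A I hx⟩ :
      extendedReesAlgebra A I) ∈ J := fun x hx =>
    hJ ▸ extendedReesAlgebra.C_mul_T_neg_one_mem_span_range hI hx
  have hcoeff : ∀ g ∈ J, ∀ n, (g : LaurentPolynomial A).coeff n ∈ I := by
    subst hJ
    refine fun g hg => extendedReesAlgebra.coeff_mem_of_mem_span ?_ hg
    rintro _ ⟨i, rfl⟩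
    exact coeff_C_mul_T_mem (hI ▸ Ideal.subset_span ⟨i, rfl⟩) _
  subst hφ
  refine ⟨fun y => ?_, le_antisymm (extendedReesAlgebra.ker_aeval_mk_T_le hcoeff)
    (extendedReesAlgebra.map_C_le_ker_aeval_mk_T hgen)⟩
  obtain ⟨g, rfl⟩ := Ideal.Quotient.mk_surjective y
  exact ⟨_, extendedReesAlgebra.aeval_mk_T_trunc hgen g⟩
end
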